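/- arXiv:0710.1131 — 2 statements merged into one kernel-verified Lean document; each statement's English description precedes it below -/
import Mathlib

section
/- For every real number x > 0, one has ∑_{n=0}^∞ 1/(x(x+2)(x+4)⋯(x+2n)) = e^{1/2} · ∑_{j=0}^∞ (-1)^j / (2^j j! (x+2j)). -/
open Finset

private lemma alt_sum_choose (n : ℕ) :
    ∑ j ∈ range (n + 1), ((-1 : ℝ) ^ j * (n + 1).choose j) = -(-1 : ℝ) ^ (n + 1) := by
  have hz : (∑ i ∈ range (n + 2), (-1 : ℤ) ^ i * ((n + 1).choose i : ℤ)) = 0 :=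
    Int.alternating_sum_range_choose_of_ne (Nat.succ_ne_zero n)
  have hr : (∑ i ∈ range (n + 2), (-1 : ℝ) ^ i * ((n + 1).choose i : ℝ)) = 0 := by
    exact_mod_cast congrArg (Int.cast : ℤ → ℝ) hz
  rw [sum_range_succ] at hr
  simp only [Nat.choose_self, Nat.cast_one, mul_one] at hr
  linarith

private lemma key (x : ℝ) (hx : 0 < x) (n : ℕ) :
    1 / ∏ i ∈ range (n + 1), (x + 2 * i) =
      ∑ j ∈ range (n + 1),
        (-1) ^ j / (2 ^ n * j.factorial * (n - j).factorial * (x + 2 * j)) := by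
  have hxj : ∀ j : ℕ, (x + 2 * (j : ℝ)) ≠ 0 := fun j => by positivity
  induction n with
  | zero => simp
  | succ n ih =>
    have hxn1 : (x + 2 * ((n : ℝ) + 1)) ≠ 0 := by positivity
    rw [prod_range_succ, ← one_div_mul_one_div, ih, sum_mul]
    have h1 : ∀ j ∈ range (n + 1),
        ((-1 : ℝ) ^ j / (2 ^ n * j.factorial * (n - j).factorial * (x + 2 * j))) *
            (1 / (x + 2 * ((n : ℕ) + 1 : ℕ))) =
          (-1) ^ j / (2 ^ (n + 1) * j.factorial * (n + 1 - j).factorial * (x + 2 * j)) -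
            ((-1) ^ j * ((n + 1).choose j)) /
              (2 ^ (n + 1) * (n + 1).factorial * (x + 2 * ((n : ℕ) + 1 : ℕ))) := by
      intro j hj
      have hjn : j ≤ n := Nat.lt_succ_iff.mp (mem_range.mp hj)
      obtain ⟨m, rfl⟩ := Nat.exists_eq_add_of_le hjn
      have hsub1 : j + m - j = m := by omega
      have hsub2 : j + m + 1 - j = m + 1 := by omega
      have hch : (((j + m + 1).choose j : ℕ) : ℝ) =
          (j + m + 1).factorial / (j.factorial * (m + 1).factorial) := by
        rw [Nat.cast_choose ℝ (by omega : j ≤ j + m + 1), hsub2]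
      rw [hsub1, hsub2, hch]
      have hfj : (j.factorial : ℝ) ≠ 0 := by positivity
      have hfm : (m.factorial : ℝ) ≠ 0 := by positivity
      have hfm1 : ((m + 1).factorial : ℝ) ≠ 0 := by positivity
      have hfn1 : ((j + m + 1).factorial : ℝ) ≠ 0 := by positivity
      have hxj' := hxj j
      have hxn1' : (x + 2 * (((j + m : ℕ) + 1 : ℕ) : ℝ)) ≠ 0 := by positivity
      have hfact : ((m + 1).factorial : ℝ) = (m + 1) * m.factorial := by
        rw [Nat.factorial_succ]; push_cast; ring
      field_simp
      rw [hfact]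
      push_cast
      ring
    rw [sum_congr rfl h1, sum_sub_distrib, ← sum_div, alt_sum_choose]
    conv_rhs => rw [sum_range_succ]
    have hfn1 : (((n + 1).factorial : ℕ) : ℝ) ≠ 0 := by positivity
    have hxn1' : (x + 2 * (((n : ℕ) + 1 : ℕ) : ℝ)) ≠ 0 := by push_cast; positivity
    rw [Nat.sub_self]
    push_cast
    field_simp
    simp only [Nat.factorial_zero, Nat.cast_one, mul_one]
    ring

theorem stmt_11 (x : ℝ) (hx : 0 < x) :
    ∑' n : ℕ, 1 / ∏ i ∈ Finset.range (n + 1), (x + 2 * i) =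
      Real.exp (1 / 2) * ∑' j : ℕ, (-1) ^ j / (2 ^ j * j.factorial * (x + 2 * j)) := by
  set g : ℕ → ℝ := fun j => (-1) ^ j / (2 ^ j * j.factorial * (x + 2 * j)) with hg_def
  set h : ℕ → ℝ := fun m => 1 / (2 ^ m * m.factorial) with hh_def
  have hxj : ∀ j : ℕ, (0 : ℝ) < x + 2 * j := fun j => by positivity
  have hg_norm : Summable fun j => ‖g j‖ := by
    apply Summable.of_nonneg_of_le (fun j => norm_nonneg _) _
      ((Real.summable_pow_div_factorial (1 / 2)).mul_left (1 / x))
    intro j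
    have h1 : ‖g j‖ = 1 / (2 ^ j * j.factorial * (x + 2 * j)) := by
      simp only [hg_def, norm_div, norm_pow, norm_neg, norm_one, one_pow]
      rw [Real.norm_eq_abs, abs_of_pos (by positivity)]
    have h2 : (1 / x) * ((1 / 2 : ℝ) ^ j / j.factorial) = 1 / (2 ^ j * j.factorial * x) := by
      rw [div_pow, one_pow]
      field_simp
    rw [h1, h2]
    apply one_div_le_one_div_of_le (by positivity)
    have : (0:ℝ) ≤ 2 ^ j * (j.factorial : ℝ) := by positivity
    nlinarith [hxj j, (Nat.cast_nonneg j : (0:ℝ) ≤ j)]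
  have hh_norm : Summable fun m => ‖h m‖ := by
    have heq : ∀ m : ℕ, ‖h m‖ = (1 / 2 : ℝ) ^ m / m.factorial := by
      intro m
      rw [hh_def]
      simp only []
      rw [Real.norm_eq_abs, abs_of_pos (by positivity), div_pow, one_pow, div_div]
    simp only [heq]
    exact Real.summable_pow_div_factorial (1 / 2)
  have hcauchy := tsum_mul_tsum_eq_tsum_sum_antidiagonal_of_summable_norm hg_norm hh_norm
  have hhsum : ∑' m, h m = Real.exp (1 / 2) := by
    rw [Real.exp_eq_exp_ℝ, NormedSpace.exp_eq_tsum_div]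
    apply tsum_congr
    intro m
    rw [hh_def]
    simp only []
    rw [div_pow, one_pow]
    field_simp
  have hlhs : ∀ n : ℕ, 1 / ∏ i ∈ Finset.range (n + 1), (x + 2 * i) =
      ∑ kl ∈ Finset.HasAntidiagonal.antidiagonal n, g kl.1 * h kl.2 := by
    intro n
    rw [key x hx n, Finset.Nat.sum_antidiagonal_eq_sum_range_succ (fun k l => g k * h l)]
    apply Finset.sum_congr rfl
    intro j hj
    have hjn : j ≤ n := Nat.lt_succ_iff.mp (Finset.mem_range.mp hj)
    rw [hg_def, hh_def]
    simp only []
    have hpow : (2 : ℝ) ^ j * 2 ^ (n - j) = 2 ^ n := by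
      rw [← pow_add, Nat.add_sub_cancel' hjn]
    have hfj : ((j.factorial : ℕ) : ℝ) ≠ 0 := by positivity
    have hfnj : (((n - j).factorial : ℕ) : ℝ) ≠ 0 := by positivity
    have hxjne : (x + 2 * (j : ℝ)) ≠ 0 := ne_of_gt (hxj j)
    field_simp
    rw [← hpow]
  calc ∑' n : ℕ, 1 / ∏ i ∈ Finset.range (n + 1), (x + 2 * i)
      = ∑' n : ℕ, ∑ kl ∈ Finset.HasAntidiagonal.antidiagonal n, g kl.1 * h kl.2 := tsum_congr hlhs
    _ = (∑' j, g j) * ∑' m, h m := hcauchy.symm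
    _ = Real.exp (1 / 2) * ∑' j, g j := by rw [hhsum, mul_comm]
end

section
/- For all integers ℓ ≥ 1 and n ≥ 1, the series S(ℓ) = ∑_{k=1}^∞ 1/(k(k+ℓ)(k+2ℓ)⋯(k+nℓ)) converges and S(ℓ) = (1/(ℓ^n n!)) ∫_0^1 (1-u^ℓ)^n / (1-u) du. -/
open Finset intervalIntegral Filter


lemma key_s16 (ℓ : ℕ) (hℓ : 1 ≤ ℓ) : ∀ m k : ℕ, 1 ≤ k →
    ∫ x in (0:ℝ)..1, x ^ (k-1) * (1 - x^ℓ)^m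
      = (ℓ:ℝ)^m * m.factorial / ∏ i ∈ range (m+1), ((k:ℝ) + i * ℓ) := by
  intro m
  induction m with
  | zero =>
    intro k hk
    simp only [pow_zero, mul_one]
    rw [integral_pow]
    rw [Nat.cast_sub hk]
    have : (0:ℝ)^(k-1+1) = 0 := by
      rw [zero_pow]; omega
    rw [this]
    push_cast
    field_simp
    have hk0 : (k:ℝ) ≠ 0 := Nat.cast_ne_zero.mpr (by omega)
    simp [hk0]
  | succ m ih =>
    intro k hk
    have hkpos : (0:ℝ) < k := by exact_mod_cast hk
    have hderiv : ∀ x ∈ Set.uIcc (0:ℝ) 1,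
        HasDerivAt (fun x : ℝ => x^k * (1 - x^ℓ)^(m+1))
          ((k:ℝ) * (x^(k-1) * (1-x^ℓ)^(m+1))
            - ((m:ℝ)+1) * ℓ * (x^(k+ℓ-1) * (1-x^ℓ)^m)) x := by
      intro x _
      have h1 : HasDerivAt (fun x : ℝ => x^k) ((k:ℝ) * x^(k-1)) x := hasDerivAt_pow k x
      have h2 : HasDerivAt (fun x : ℝ => (1 - x^ℓ)^(m+1))
          ((((m:ℝ)+1) * (1-x^ℓ)^m) * (-(ℓ * x^(ℓ-1)))) x := by
        have hb : HasDerivAt (fun x : ℝ => 1 - x^ℓ) (-(ℓ * x^(ℓ-1))) x := by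
          simpa using ((hasDerivAt_pow ℓ x).const_sub 1)
        simpa [Nat.cast_add, Function.comp_def] using
          (HasDerivAt.comp x (by simpa using hasDerivAt_pow (m+1) (1 - x^ℓ)) hb)
      have h3 := h1.mul h2
      refine h3.congr_deriv ?_
      have hx : x^k * x^(ℓ-1) = x^(k+ℓ-1) := by
        rw [← pow_add]; congr 1; omega
      rw [← hx]
      ring
    have hcont1 : Continuous fun x : ℝ => x^(k-1) * (1-x^ℓ)^(m+1) := by fun_prop
    have hcont2 : Continuous fun x : ℝ => x^(k+ℓ-1) * (1-x^ℓ)^m := by fun_prop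
    have hint : IntervalIntegrable (fun x : ℝ =>
        (k:ℝ) * (x^(k-1) * (1-x^ℓ)^(m+1)) - ((m:ℝ)+1) * ℓ * (x^(k+ℓ-1) * (1-x^ℓ)^m))
        MeasureTheory.volume 0 1 :=
      ((continuous_const.mul hcont1).sub (continuous_const.mul hcont2)).intervalIntegrable 0 1
    have hftc := integral_eq_sub_of_hasDerivAt hderiv hint
    have hF1 : (1:ℝ)^k * (1 - (1:ℝ)^ℓ)^(m+1) = 0 := by simp
    have hF0 : (0:ℝ)^k * (1 - (0:ℝ)^ℓ)^(m+1) = 0 := by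
      rw [zero_pow (by omega : k ≠ 0)]; ring
    rw [hF1, hF0, sub_zero,
        integral_sub (f := fun x => (k:ℝ) * (x^(k-1) * (1-x^ℓ)^(m+1)))
          (g := fun x => ((m:ℝ)+1) * ℓ * (x^(k+ℓ-1) * (1-x^ℓ)^m))
          ((continuous_const.mul hcont1).intervalIntegrable 0 1)
          ((continuous_const.mul hcont2).intervalIntegrable 0 1),
        integral_const_mul, integral_const_mul] at hftc
    have ih' := ih (k+ℓ) (by omega)
    rw [show k + ℓ - 1 = (k+ℓ) - 1 from rfl, ih'] at hftc
    -- products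
    have hprod : ∏ i ∈ range (m+2), ((k:ℝ) + i * ℓ)
        = (∏ i ∈ range (m+1), (((k+ℓ:ℕ):ℝ) + i * ℓ)) * k := by
      rw [Finset.prod_range_succ']
      push_cast
      congr 1
      · apply Finset.prod_congr rfl
        intro i _
        push_cast; ring
      · ring
    have hP : (0:ℝ) < ∏ i ∈ range (m+1), (((k+ℓ:ℕ):ℝ) + i * ℓ) := by
      apply Finset.prod_pos
      intro i _
      have : (0:ℝ) < ((k+ℓ:ℕ):ℝ) := by positivity
      positivity
    rw [show m + 1 + 1 = m + 2 from rfl, hprod]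
    have hfact : ((m+1).factorial : ℝ) = ((m:ℝ)+1) * m.factorial := by
      rw [Nat.factorial_succ]; push_cast; ring
    rw [hfact]
    have h3 := sub_eq_zero.mp hftc
    have hP' : (∏ i ∈ range (m+1), (((k+ℓ:ℕ):ℝ) + i * ℓ)) ≠ 0 := ne_of_gt hP
    field_simp at h3
    rw [eq_div_iff (by positivity)]
    push_cast at h3 ⊢
    rw [show ∏ x ∈ range (m+1), ((k:ℝ) + ℓ + ℓ * x) = ∏ x ∈ range (m+1), ((k:ℝ) + ℓ + x * ℓ) from
      Finset.prod_congr rfl fun _ _ => by ring] at h3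
    linear_combination h3

lemma aux {A B P0 Pn nl : ℝ} (hA : 0 < A) (hB : 0 < B) (hPn : 0 < Pn) (hnl : 0 < nl)
    (hAB : A * Pn = B * P0) (hd : Pn - P0 = nl) : 1/(A*Pn) = (1/A - 1/B)/nl := by
  rw [div_sub_div _ _ (ne_of_gt hA) (ne_of_gt hB), div_div,
    div_eq_div_iff (by positivity) (by positivity)]
  linear_combination A * hAB - A * B * hd

theorem stmt_16 (ℓ n : ℕ) (hℓ : 1 ≤ ℓ) (hn : 1 ≤ n) :
    HasSum (fun k : ℕ => 1 / ∏ i ∈ Finset.range (n + 1), ((k : ℝ) + 1 + i * ℓ))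
      ((1 / (ℓ ^ n * n.factorial)) * ∫ u in (0 : ℝ)..1, (1 - u ^ ℓ) ^ n / (1 - u)) := by
  set a : ℕ → ℝ := fun k => 1 / ∏ i ∈ range n, ((k:ℝ) + 1 + i * ℓ) with ha
  have hfac : ∀ (k i : ℕ), (0:ℝ) < (k:ℝ) + 1 + i * ℓ := by
    intro k i; positivity
  have hApos : ∀ k : ℕ, (0:ℝ) < ∏ i ∈ range n, ((k:ℝ) + 1 + i * ℓ) := fun k =>
    Finset.prod_pos fun i _ => hfac k i
  have hA1pos : ∀ k : ℕ, (0:ℝ) < ∏ i ∈ range (n+1), ((k:ℝ) + 1 + i * ℓ) := fun k =>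
    Finset.prod_pos fun i _ => hfac k i
  have hnl : (0:ℝ) < (n:ℝ) * ℓ := by
    have : (0:ℝ) < (n:ℝ) := by exact_mod_cast hn
    have : (0:ℝ) < (ℓ:ℝ) := by exact_mod_cast hℓ
    positivity
  -- Step A: term identity
  have hterm : ∀ k : ℕ, 1 / ∏ i ∈ range (n+1), ((k:ℝ) + 1 + i * ℓ)
      = (a k - a (k+ℓ)) / ((n:ℝ) * ℓ) := by
    intro k
    have hB : ∏ i ∈ range n, (((k+ℓ:ℕ):ℝ) + 1 + i * ℓ)
        = ∏ i ∈ range n, ((k:ℝ) + 1 + (i+1) * ℓ) := by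
      apply Finset.prod_congr rfl; intro i _; push_cast; ring
    have h1 : ∏ i ∈ range (n+1), ((k:ℝ) + 1 + i * ℓ)
        = (∏ i ∈ range n, ((k:ℝ) + 1 + i * ℓ)) * ((k:ℝ) + 1 + n * ℓ) := by
      rw [Finset.prod_range_succ]
    have h2 : ∏ i ∈ range (n+1), ((k:ℝ) + 1 + i * ℓ)
        = (∏ i ∈ range n, ((k:ℝ) + 1 + (i+1) * ℓ)) * ((k:ℝ) + 1) := by
      rw [Finset.prod_range_succ']
      congr 1
      · exact Finset.prod_congr rfl fun i _ => by push_cast; ring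
      · norm_num
    have hBpos : 0 < ∏ i ∈ range n, ((k:ℝ) + 1 + (i+1) * ℓ) :=
      Finset.prod_pos fun i _ => by positivity
    have hAB : (∏ i ∈ range n, ((k:ℝ) + 1 + i * ℓ)) * ((k:ℝ) + 1 + n * ℓ)
        = (∏ i ∈ range n, ((k:ℝ) + 1 + (i+1) * ℓ)) * ((k:ℝ) + 1) := by rw [← h1, ← h2]
    show _ = (1 / ∏ i ∈ range n, ((k:ℝ) + 1 + i * ℓ)
      - 1 / ∏ i ∈ range n, (((k+ℓ:ℕ):ℝ) + 1 + i * ℓ)) / ((n:ℝ) * ℓ)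
    rw [hB, h1]
    exact aux (hApos k) hBpos (by positivity) hnl hAB (by ring)
  -- a tends to zero
  have hazero : Tendsto a atTop (nhds 0) := by
    apply squeeze_zero (fun k => le_of_lt (one_div_pos.mpr (hApos k)))
      (g := fun k : ℕ => 1 / ((k:ℝ) + 1))
    · intro k
      apply one_div_le_one_div_of_le (by positivity)
      calc (k:ℝ) + 1 = ∏ i ∈ range n, (if i = 0 then (k:ℝ)+1 else 1) := by
            rw [Finset.prod_ite_eq' (range n) 0 (fun _ => (k:ℝ)+1)]
            rw [if_pos (Finset.mem_range.mpr (by omega))]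
        _ ≤ ∏ i ∈ range n, ((k:ℝ) + 1 + i * ℓ) := by
            apply Finset.prod_le_prod
            · intro i _; split <;> positivity
            · intro i _
              split
              · next h => subst h; simp
              · next h =>
                have h1 : (1:ℝ) ≤ (i:ℝ) := by exact_mod_cast Nat.one_le_iff_ne_zero.mpr h
                have h2 : (1:ℝ) ≤ (ℓ:ℝ) := by exact_mod_cast hℓ
                nlinarith [Nat.cast_nonneg (α := ℝ) k]
    · simpa using tendsto_one_div_add_atTop_nhds_zero_nat (𝕜 := ℝ)
  -- partial sums split
  have hsplit : ∀ N, ∑ k ∈ range N, (a k - a (k+ℓ))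
      = ∑ k ∈ range ℓ, a k - ∑ k ∈ range ℓ, a (N+k) := by
    intro N
    have e1 : ∑ k ∈ Finset.Ico ℓ (N+ℓ), a k = ∑ k ∈ range N, a (k+ℓ) := by
      rw [Finset.sum_Ico_eq_sum_range]
      simp only [Nat.add_sub_cancel]
      exact Finset.sum_congr rfl fun i _ => by rw [add_comm]
    have e2 : ∑ k ∈ Finset.Ico N (N+ℓ), a k = ∑ k ∈ range ℓ, a (N+k) := by
      rw [Finset.sum_Ico_eq_sum_range]
      simp only [Nat.add_sub_cancel_left]
    have h1 : ∑ k ∈ range N, a k + ∑ k ∈ Finset.Ico N (N+ℓ), a k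
        = ∑ k ∈ range (N+ℓ), a k := by
      rw [Finset.range_eq_Ico, Finset.range_eq_Ico]
      exact Finset.sum_Ico_consecutive _ (Nat.zero_le _) (Nat.le_add_right _ _)
    have h2 : ∑ k ∈ range ℓ, a k + ∑ k ∈ Finset.Ico ℓ (N+ℓ), a k
        = ∑ k ∈ range (N+ℓ), a k := by
      rw [Finset.range_eq_Ico, Finset.range_eq_Ico]
      exact Finset.sum_Ico_consecutive _ (Nat.zero_le _) (Nat.le_add_left _ _)
    rw [Finset.sum_sub_distrib]
    linarith [e1, e2, h1, h2]
  -- tail tends to zero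
  have htail : Tendsto (fun N => ∑ k ∈ range ℓ, a (N+k)) atTop (nhds 0) := by
    have h := tendsto_finset_sum (range ℓ)
      (fun k (_ : k ∈ range ℓ) => hazero.comp (tendsto_add_atTop_nat k))
    simpa using h
  -- partial sums converge
  have hS : Tendsto (fun N => ∑ k ∈ range N,
      (1 / ∏ i ∈ range (n+1), ((k:ℝ) + 1 + i * ℓ)))
      atTop (nhds ((∑ k ∈ range ℓ, a k) / ((n:ℝ)*ℓ))) := by
    have heq : ∀ N, ∑ k ∈ range N, (1 / ∏ i ∈ range (n+1), ((k:ℝ) + 1 + i * ℓ))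
        = (∑ k ∈ range ℓ, a k - ∑ k ∈ range ℓ, a (N+k)) / ((n:ℝ)*ℓ) := by
      intro N
      rw [Finset.sum_congr rfl fun k _ => hterm k, ← Finset.sum_div, hsplit]
    simp only [heq]
    have hc : Tendsto (fun _ : ℕ => ∑ k ∈ range ℓ, a k) atTop
        (nhds (∑ k ∈ range ℓ, a k)) := tendsto_const_nhds
    have := (hc.sub htail).div_const ((n:ℝ)*ℓ)
    simpa using this
  have hsum : HasSum (fun k : ℕ => 1 / ∏ i ∈ range (n+1), ((k:ℝ) + 1 + i * ℓ))
      ((∑ k ∈ range ℓ, a k) / ((n:ℝ)*ℓ)) :=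
    (hasSum_iff_tendsto_nat_of_nonneg
      (fun k => le_of_lt (one_div_pos.mpr (hA1pos k))) _).mpr hS
  -- the integral
  have hintg : ∫ u in (0:ℝ)..1, (1-u^ℓ)^n/(1-u)
      = ∑ j ∈ range ℓ, ∫ u in (0:ℝ)..1, u^j * (1-u^ℓ)^(n-1) := by
    rw [← intervalIntegral.integral_finset_sum
      (fun j _ => Continuous.intervalIntegrable (by fun_prop) 0 1)]
    apply intervalIntegral.integral_congr_ae
    filter_upwards [MeasureTheory.compl_mem_ae_iff.mpr (MeasureTheory.measure_singleton (1:ℝ))] with x hx _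
    have hx1 : x ≠ 1 := hx
    have hxne : (1:ℝ) - x ≠ 0 := sub_ne_zero.mpr (Ne.symm hx1)
    have hgeom : ((1:ℝ)-x) * ∑ j ∈ range ℓ, x^j = 1 - x^ℓ := by
      linear_combination -(geom_sum_mul x ℓ)
    calc (1-x^ℓ)^n/(1-x)
        = ((1-x^ℓ)^(n-1) * (((1:ℝ)-x) * ∑ j ∈ range ℓ, x^j))/(1-x) := by
          rw [hgeom, ← pow_succ, show n-1+1 = n from by omega]
      _ = (1-x^ℓ)^(n-1) * ∑ j ∈ range ℓ, x^j := by
          rw [show (1-x^ℓ)^(n-1) * (((1:ℝ)-x) * ∑ j ∈ range ℓ, x^j)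
            = ((1-x^ℓ)^(n-1) * ∑ j ∈ range ℓ, x^j) * (1-x) from by ring,
            mul_div_cancel_right₀ _ hxne]
      _ = ∑ j ∈ range ℓ, x^j * (1-x^ℓ)^(n-1) := by
          rw [Finset.mul_sum]
          exact Finset.sum_congr rfl fun j _ => mul_comm _ _
  -- value of each integral
  have hval : ∀ j : ℕ, ∫ u in (0:ℝ)..1, u^j * (1-u^ℓ)^(n-1)
      = (ℓ:ℝ)^(n-1) * (n-1).factorial / ∏ i ∈ range n, ((j:ℝ) + 1 + i * ℓ) := by
    intro j
    have h := key_s16 ℓ hℓ (n-1) (j+1) (by omega)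
    simp only [Nat.add_sub_cancel] at h
    rw [h, show (n-1)+1 = n from by omega]
    congr 1
    exact Finset.prod_congr rfl fun i _ => by push_cast; ring
  -- final value computation
  have hfinal : (1 / ((ℓ:ℝ) ^ n * n.factorial)) * ∫ u in (0:ℝ)..1, (1-u^ℓ)^n/(1-u)
      = (∑ k ∈ range ℓ, a k) / ((n:ℝ)*ℓ) := by
    rw [hintg]
    simp only [hval]
    rw [Finset.mul_sum, Finset.sum_div]
    apply Finset.sum_congr rfl
    intro j _
    have hPj := hApos j
    have hℓpos : (0:ℝ) < ℓ := by exact_mod_cast hℓ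
    have hnpos : (0:ℝ) < n := by exact_mod_cast hn
    have hfac2 : (n.factorial : ℝ) = n * (n-1).factorial := by
      exact_mod_cast (Nat.mul_factorial_pred (by omega)).symm
    have hℓn : (ℓ:ℝ)^n = (ℓ:ℝ)^(n-1) * ℓ := by
      rw [← pow_succ, show n-1+1 = n from by omega]
    rw [ha]
    simp only []
    rw [hfac2, hℓn]
    have hfp : (0:ℝ) < ((n-1).factorial : ℕ) := by exact_mod_cast Nat.factorial_pos _
    field_simp
  rw [← hfinal] at hsum
  exact hsum
end
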